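/- arXiv:2203.09519 — 7 statements merged into one kernel-verified Lean document; each statement's English description precedes it below -/
import Mathlib

section
/- Suppose functions fₙ : [0,∞) → ℝ satisfy f₀ = 1, fₙ(0) = 0 for n ≥ 1, and the integral recurrence (n+1)·fₙ(y) = ∫₀^y fₙ₋₁(s)/(y−s+1) ds + ∫₀^y fₙ₋₁(s)/(s+n) ds for n ≥ 1, y ≥ 0, where each fₙ₋₁ is continuous. Then fₙ is differentiable on (0,∞) and fₙ′(y) = fₙ₋₁(y)/(y+n) for all y ≥ 0 and n ≥ 1. -/
open MeasureTheory Set intervalIntegral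

/-!
For `n ≥ 1` one has `fₙ(y) = ∫₀^y fₙ₋₁(s)/(s+n) ds`, and the derivative formula is then the
fundamental theorem of calculus. The identity is proved by induction on `n`. In the step, `fₙ` is
the primitive of `c = fₙ₋₁/(· + n)`, so by Fubini on a triangle
`∫₀^y fₙ(t)/(y-t+1) dt = ∫₀^y ∫₀^u c(s)/(u-s+1) ds du`. The partial fraction
`1/((s+n)(u-s+1)) = (1/(s+n) + 1/(u-s+1))/(u+n+1)` and the recurrence for `fₙ` turn the inner
integral into `(n+1) fₙ(u)/(u+n+1)`, so the two integrals in the recurrence for `fₙ₊₁` are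
`(n+1) B` and `B` with `B = ∫₀^y fₙ(t)/(t+n+1) dt`.
-/

theorem integral_integral_swap_triangle {a b : ℝ} (hab : a ≤ b) {F : ℝ → ℝ → ℝ}
    (hF : IntegrableOn (Function.uncurry F) ({p : ℝ × ℝ | p.1 ≤ p.2} ∩ Icc a b ×ˢ Icc a b)) :
    ∫ t in a..b, ∫ s in a..t, F s t = ∫ s in a..b, ∫ t in s..b, F s t := by
  set G : ℝ × ℝ → ℝ := {p : ℝ × ℝ | p.1 ≤ p.2}.indicator (Function.uncurry F) with hG
  have hGint : Integrable (Function.uncurry fun s t => G (s, t))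
      ((volume.restrict (Ioc a b)).prod (volume.restrict (Ioc a b))) := by
    rw [Measure.prod_restrict, ← Measure.volume_eq_prod]
    refine (integrableOn_indicator_iff (measurableSet_le measurable_fst measurable_snd)).2 ?_
    exact hF.mono_set
      (inter_subset_inter_right _ (prod_mono Ioc_subset_Icc_self Ioc_subset_Icc_self))
  have inner_left : ∀ t ∈ Ioc a b, ∫ s in Ioc a b, G (s, t) = ∫ s in a..t, F s t := by
    intro t ht
    have : (fun s => G (s, t)) = (Iic t).indicator (fun s => F s t) := by
      ext s; by_cases h : s ≤ t <;> simp [hG, indicator, h]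
    rw [this, setIntegral_indicator measurableSet_Iic, Ioc_inter_Iic, min_eq_right ht.2,
      integral_of_le ht.1.le]
  have inner_right : ∀ s ∈ Ioc a b, ∫ t in Ioc a b, G (s, t) = ∫ t in s..b, F s t := by
    intro s hs
    have : (fun t => G (s, t)) = (Ici s).indicator (fun t => F s t) := by
      ext t; by_cases h : s ≤ t <;> simp [hG, indicator, h]
    have hIcc : Ioc a b ∩ Ici s = Icc s b := by
      ext t
      simp only [mem_inter_iff, mem_Ioc, mem_Ici, mem_Icc]
      exact ⟨fun h => ⟨h.2, h.1.2⟩, fun h => ⟨⟨hs.1.trans_le h.1, h.2⟩, h.1⟩⟩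
    rw [this, setIntegral_indicator measurableSet_Ici, hIcc, integral_Icc_eq_integral_Ioc,
      integral_of_le hs.2]
  rw [integral_of_le hab, integral_of_le hab,
    ← setIntegral_congr_fun measurableSet_Ioc inner_left,
    ← setIntegral_congr_fun measurableSet_Ioc inner_right]
  exact (integral_integral_swap hGint).symm

theorem integral_primitive_mul_comp_sub {a b : ℝ} (hab : a ≤ b) {c K : ℝ → ℝ}
    (hc : ContinuousOn c (Icc a b)) (hK : ContinuousOn K (Icc 0 (b - a))) :
    ∫ t in a..b, (∫ s in a..t, c s) * K (b - t) = ∫ u in a..b, ∫ s in a..u, c s * K (u - s) := by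
  set T : Set (ℝ × ℝ) := {p : ℝ × ℝ | p.1 ≤ p.2} ∩ Icc a b ×ˢ Icc a b
  have hT : IsCompact T :=
    (isCompact_Icc.prod isCompact_Icc).inter_left (isClosed_le continuous_fst continuous_snd)
  have hc' : ContinuousOn (fun p : ℝ × ℝ => c p.1) T :=
    hc.comp continuousOn_fst fun p hp => hp.2.1
  have hleft : IntegrableOn (Function.uncurry fun s t => c s * K (b - t)) T := by
    refine (hc'.mul (hK.comp (by fun_prop) fun p hp => ?_)).integrableOn_compact hT
    obtain ⟨-, -, h1, h2⟩ := hp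
    constructor <;> linarith
  have hright : IntegrableOn (Function.uncurry fun s u => c s * K (u - s)) T := by
    refine (hc'.mul (hK.comp (by fun_prop) fun p hp => ?_)).integrableOn_compact hT
    obtain ⟨hp, ⟨h1, -⟩, -, h2⟩ := hp
    exact ⟨sub_nonneg.2 hp, by linarith⟩
  calc ∫ t in a..b, (∫ s in a..t, c s) * K (b - t)
      = ∫ t in a..b, ∫ s in a..t, c s * K (b - t) := by
        simp only [intervalIntegral.integral_mul_const]
    _ = ∫ s in a..b, ∫ t in s..b, c s * K (b - t) := integral_integral_swap_triangle hab hleft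
    _ = ∫ s in a..b, ∫ u in s..b, c s * K (u - s) := by
      -- both inner integrals are `c s * ∫ x in 0..b - s, K x`
      simp only [intervalIntegral.integral_const_mul, integral_comp_sub_left,
        integral_comp_sub_right, sub_self]
    _ = ∫ u in a..b, ∫ s in a..u, c s * K (u - s) :=
      (integral_integral_swap_triangle hab hright).symm

theorem hasDerivWithinAt_integral_Ici {g : ℝ → ℝ} {a y : ℝ} (hg : ContinuousOn g (Ici a))
    (hy : a ≤ y) : HasDerivWithinAt (fun u => ∫ x in a..u, g x) (g y) (Ici a) y := by
  set G : ℝ → ℝ := fun x => g (max a x)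
  have hG : Continuous G :=
    hg.comp_continuous (continuous_const.max continuous_id) fun x => le_max_left a x
  have hGg : ∀ x ∈ Ici a, G x = g x := fun x hx => congrArg g (max_eq_right hx)
  have hint : ∀ u ∈ Ici a, ∫ x in a..u, g x = ∫ x in a..u, G x := fun u hu =>
    integral_congr fun x hx => (hGg x (uIcc_of_le (mem_Ici.1 hu) ▸ hx).1).symm
  rw [← hGg y hy]
  exact (hG.integral_hasStrictDerivAt a y).hasDerivAt.hasDerivWithinAt.congr hint (hint y hy)

theorem integral_div_mul_one_div_sub_add_one {g : ℝ → ℝ} {u ν : ℝ} (hu : 0 ≤ u) (hν : 0 < ν)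
    (hg : ContinuousOn g (Icc 0 u)) :
    ∫ s in 0..u, g s / (s + ν) * (1 / (u - s + 1))
      = ((∫ s in 0..u, g s / (u - s + 1)) + ∫ s in 0..u, g s / (s + ν)) / (u + ν + 1) := by
  have hg' : ContinuousOn g (uIcc 0 u) := uIcc_of_le hu ▸ hg
  have i1 : IntervalIntegrable (fun s => g s / (u - s + 1)) volume 0 u :=
    (hg'.div (by fun_prop) fun s hs => by linarith [(uIcc_of_le hu ▸ hs).2]).intervalIntegrable
  have i2 : IntervalIntegrable (fun s => g s / (s + ν)) volume 0 u :=
    (hg'.div (by fun_prop) fun s hs => by linarith [(uIcc_of_le hu ▸ hs).1]).intervalIntegrable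
  rw [← integral_add i1 i2, ← intervalIntegral.integral_div]
  refine integral_congr fun s hs => ?_
  obtain ⟨hs0, hsu⟩ := uIcc_of_le hu ▸ hs
  have : u - s + 1 ≠ 0 := by linarith
  have : s + ν ≠ 0 := by linarith
  have : u + ν + 1 ≠ 0 := by linarith
  field_simp
  ring

section Recurrence

variable {f : ℕ → ℝ → ℝ} (hcont : ∀ n, ContinuousOn (f n) (Ici (0:ℝ)))
  (hrec : ∀ n : ℕ, 1 ≤ n → ∀ y : ℝ, 0 ≤ y →
    ((n : ℝ) + 1) * f n y
      = (∫ s in (0:ℝ)..y, f (n - 1) s / (y - s + 1)) + ∫ s in (0:ℝ)..y, f (n - 1) s / (s + n))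
include hrec

theorem apply_one_eq_integral (hf0 : ∀ y : ℝ, 0 ≤ y → f 0 y = 1) {y : ℝ} (hy : 0 ≤ y) :
    f 1 y = ∫ s in (0:ℝ)..y, f 0 s / (s + 1) := by
  have h := hrec 1 le_rfl y hy
  have hf0' : ∀ s ∈ uIcc 0 y, f 0 s = 1 := fun s hs => hf0 s (uIcc_of_le hy ▸ hs).1
  have hreflect : ∫ s in (0:ℝ)..y, f 0 s / (y - s + 1) = ∫ s in (0:ℝ)..y, f 0 s / (s + 1) := by
    calc ∫ s in (0:ℝ)..y, f 0 s / (y - s + 1)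
        = ∫ s in (0:ℝ)..y, 1 / (y - s + 1) := integral_congr fun s hs => by simp [hf0' s hs]
      _ = ∫ s in (0:ℝ)..y, 1 / (s + 1) := by
        simpa using integral_comp_sub_left (fun s => 1 / (s + 1)) y (a := 0) (b := y)
      _ = ∫ s in (0:ℝ)..y, f 0 s / (s + 1) := integral_congr fun s hs => by simp [hf0' s hs]
  norm_num at h
  linarith

include hcont in
theorem apply_succ_eq_integral {n : ℕ} (hn : 1 ≤ n)
    (ih : ∀ y : ℝ, 0 ≤ y → f n y = ∫ s in (0:ℝ)..y, f (n - 1) s / (s + n)) {y : ℝ} (hy : 0 ≤ y) :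
    f (n + 1) y = ∫ s in (0:ℝ)..y, f n s / (s + (n + 1)) := by
  have hn' : (1 : ℝ) ≤ n := by exact_mod_cast hn
  set c : ℝ → ℝ := fun s => f (n - 1) s / (s + n)
  have hc : ContinuousOn c (Icc 0 y) :=
    ((hcont _).mono Icc_subset_Ici_self).div (by fun_prop) fun s hs => by linarith [hs.1]
  have hconv : ∀ u, 0 ≤ u →
      ∫ s in (0:ℝ)..u, c s * (1 / (u - s + 1)) = (n + 1) * (f n u / (u + (n + 1))) := by
    intro u hu
    have hrec_u : ∫ s in (0:ℝ)..u, f (n - 1) s / (u - s + 1) = n * f n u := by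
      linarith [hrec n hn u hu, ih u hu]
    rw [integral_div_mul_one_div_sub_add_one hu (by linarith) ((hcont _).mono Icc_subset_Ici_self),
      hrec_u, ← ih u hu]
    field_simp
    ring
  have hA : ∫ t in (0:ℝ)..y, f n t / (y - t + 1)
      = (n + 1) * ∫ t in (0:ℝ)..y, f n t / (t + (n + 1)) := by
    calc ∫ t in (0:ℝ)..y, f n t / (y - t + 1)
        = ∫ t in (0:ℝ)..y, (∫ s in (0:ℝ)..t, c s) * (1 / (y - t + 1)) :=
          integral_congr fun t ht => by rw [ih t (uIcc_of_le hy ▸ ht).1, div_eq_mul_one_div]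
      _ = ∫ u in (0:ℝ)..y, ∫ s in (0:ℝ)..u, c s * (1 / (u - s + 1)) :=
          integral_primitive_mul_comp_sub hy hc (K := fun x => 1 / (x + 1))
            (continuousOn_const.div (by fun_prop) fun x hx => by linarith [hx.1])
      _ = ∫ u in (0:ℝ)..y, (n + 1) * (f n u / (u + (n + 1))) :=
          integral_congr fun u hu => hconv u (uIcc_of_le hy ▸ hu).1
      _ = (n + 1) * ∫ t in (0:ℝ)..y, f n t / (t + (n + 1)) :=
          intervalIntegral.integral_const_mul _ _
  have h := hrec (n + 1) (by omega) y hy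
  push_cast at h
  rw [hA] at h
  have : (n : ℝ) + 1 + 1 ≠ 0 := by positivity
  exact mul_left_cancel₀ this (by linarith)

include hcont in
theorem eq_integral_of_recurrence (hf0 : ∀ y : ℝ, 0 ≤ y → f 0 y = 1) {n : ℕ} (hn : 1 ≤ n)
    {y : ℝ} (hy : 0 ≤ y) : f n y = ∫ s in (0:ℝ)..y, f (n - 1) s / (s + n) := by
  induction n, hn using Nat.le_induction generalizing y with
  | base => simpa using apply_one_eq_integral hrec hf0 hy
  | succ n hn ih => simpa using apply_succ_eq_integral hcont hrec hn (fun u hu => ih hu) hy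

end Recurrence

theorem stmt_2_general (f : ℕ → ℝ → ℝ)
    (hcont : ∀ n, ContinuousOn (f n) (Ici (0:ℝ)))
    (hf0 : ∀ y : ℝ, 0 ≤ y → f 0 y = 1)
    (hrec : ∀ n : ℕ, 1 ≤ n → ∀ y : ℝ, 0 ≤ y →
      ((n : ℝ) + 1) * f n y
        = (∫ s in (0:ℝ)..y, f (n - 1) s / (y - s + 1))
          + ∫ s in (0:ℝ)..y, f (n - 1) s / (s + n)) :
    ∀ n : ℕ, 1 ≤ n →
      DifferentiableOn ℝ (f n) (Ioi (0:ℝ)) ∧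
      ∀ y : ℝ, 0 ≤ y →
        HasDerivWithinAt (f n) (f (n - 1) y / (y + n)) (Ici (0:ℝ)) y := by
  intro n hn
  have hc : ContinuousOn (fun s => f (n - 1) s / (s + n)) (Ici 0) :=
    (hcont _).div (by fun_prop) fun s hs => by
      have : (1 : ℝ) ≤ n := by exact_mod_cast hn
      linarith [mem_Ici.1 hs]
  have hprim : ∀ u ∈ Ici (0:ℝ), f n u = ∫ s in (0:ℝ)..u, f (n - 1) s / (s + n) :=
    fun u hu => eq_integral_of_recurrence hcont hrec hf0 hn hu
  have hderiv : ∀ y : ℝ, 0 ≤ y →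
      HasDerivWithinAt (f n) (f (n - 1) y / (y + n)) (Ici 0) y := fun y hy =>
    (hasDerivWithinAt_integral_Ici hc hy).congr hprim (hprim y hy)
  exact ⟨fun y hy => (hderiv y hy.le).differentiableWithinAt.mono Ioi_subset_Ici_self, hderiv⟩

/-- If `f₀ = 1` on `[0,∞)`, `fₙ(0) = 0` for `n ≥ 1`, each `fₙ` is continuous on `[0,∞)`,
and `(n+1)·fₙ(y) = ∫₀^y fₙ₋₁(s)/(y−s+1) ds + ∫₀^y fₙ₋₁(s)/(s+n) ds` for `n ≥ 1`, `y ≥ 0`,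
then for `n ≥ 1` the function `fₙ` is differentiable on `(0,∞)` and its (one-sided)
derivative on `[0,∞)` satisfies `fₙ′(y) = fₙ₋₁(y)/(y+n)` for all `y ≥ 0`. -/
theorem stmt_2 (f : ℕ → ℝ → ℝ)
    (hcont : ∀ n, ContinuousOn (f n) (Ici (0:ℝ)))
    (hf0 : ∀ y : ℝ, 0 ≤ y → f 0 y = 1)
    (hzero : ∀ n : ℕ, 1 ≤ n → f n 0 = 0)
    (hrec : ∀ n : ℕ, 1 ≤ n → ∀ y : ℝ, 0 ≤ y →
      ((n : ℝ) + 1) * f n y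
        = (∫ s in (0:ℝ)..y, f (n - 1) s / (y - s + 1))
          + ∫ s in (0:ℝ)..y, f (n - 1) s / (s + n)) :
    ∀ n : ℕ, 1 ≤ n →
      DifferentiableOn ℝ (f n) (Ioi (0:ℝ)) ∧
      ∀ y : ℝ, 0 ≤ y →
        HasDerivWithinAt (f n) (f (n - 1) y / (y + n)) (Ici (0:ℝ)) y :=
  stmt_2_general f hcont hf0 hrec
end

section
/- Suppose functions fₙ : [0,∞) → ℝ are continuous and satisfy f₀ = 1, fₙ(0) = 0 for n ≥ 1, fₙ′(y) = fₙ₋₁(y)/(y+n) for all y ≥ 0 and n ≥ 1, and the recurrence (n+1)·fₙ(y) = ∫₀^y fₙ₋₁(s)/(y−s+1) ds + ∫₀^y fₙ₋₁(s)/(s+n) ds. Then the reflection identity ∫₀^y fₙ(s)/(y−s+1) ds = (n+1)·∫₀^y fₙ(s)/(s+n+1) ds holds for all y ≥ 0 and n ≥ 0. -/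
open MeasureTheory Set

/-- Under the hypotheses that the `fₙ` are continuous on `[0,∞)`, `f₀ = 1`, `fₙ(0) = 0`
for `n ≥ 1`, the differential recurrence `fₙ′(y) = fₙ₋₁(y)/(y+n)` holds on `[0,∞)`,
and the integral recurrence
`(n+1)·fₙ(y) = ∫₀^y fₙ₋₁(s)/(y−s+1) ds + ∫₀^y fₙ₋₁(s)/(s+n) ds` holds,
the reflection identity
`∫₀^y fₙ(s)/(y−s+1) ds = (n+1)·∫₀^y fₙ(s)/(s+n+1) ds` holds for all `y ≥ 0`, `n ≥ 0`. -/
theorem stmt_3 (f : ℕ → ℝ → ℝ)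
    (hcont : ∀ n, ContinuousOn (f n) (Ici (0:ℝ)))
    (hf0 : ∀ y : ℝ, 0 ≤ y → f 0 y = 1)
    (hzero : ∀ n : ℕ, 1 ≤ n → f n 0 = 0)
    (hderiv : ∀ n : ℕ, 1 ≤ n → ∀ y : ℝ, 0 ≤ y →
      HasDerivWithinAt (f n) (f (n - 1) y / (y + n)) (Ici (0:ℝ)) y)
    (hrec : ∀ n : ℕ, 1 ≤ n → ∀ y : ℝ, 0 ≤ y →
      ((n : ℝ) + 1) * f n y
        = (∫ s in (0:ℝ)..y, f (n - 1) s / (y - s + 1))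
          + ∫ s in (0:ℝ)..y, f (n - 1) s / (s + n)) :
    ∀ n : ℕ, ∀ y : ℝ, 0 ≤ y →
      (∫ s in (0:ℝ)..y, f n s / (y - s + 1))
        = ((n : ℝ) + 1) * ∫ s in (0:ℝ)..y, f n s / (s + n + 1) := by

  intro n y hy
  -- key: f (n+1) y = ∫ s in 0..y, f n s / (s + n + 1)
  have hFTC : f (n + 1) y = ∫ s in (0:ℝ)..y, f n s / (s + n + 1) := by
    have hcontI : ContinuousOn (fun s => f n s / (s + (n:ℝ) + 1)) (Icc (0:ℝ) y) := by
      apply ContinuousOn.div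
      · exact (hcont n).mono (fun x hx => hx.1)
      · exact (continuousOn_id.add continuousOn_const).add continuousOn_const
      · intro x hx
        have : (0:ℝ) < x + n + 1 := by
          have := hx.1; have : (0:ℝ) ≤ (n:ℝ) := Nat.cast_nonneg n; nlinarith [hx.1]
        linarith
    have hint : IntervalIntegrable (fun s => f n s / (s + (n:ℝ) + 1)) volume 0 y := by
      apply ContinuousOn.intervalIntegrable
      rwa [uIcc_of_le hy]
    have heq := intervalIntegral.integral_eq_sub_of_hasDeriv_right_of_le hy
      ((hcont (n+1)).mono (fun x hx => hx.1))
      (fun x hx => by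
        have h := hderiv (n+1) (Nat.le_add_left 1 n) x (le_of_lt hx.1)
        have h2 : f (n + 1 - 1) x / (x + ((n:ℝ)+1)) = f n x / (x + n + 1) := by
          simp [Nat.add_sub_cancel]; ring_nf
        have h3 : HasDerivWithinAt (f (n+1)) (f n x / (x + n + 1)) (Ici (0:ℝ)) x := by
          convert h using 1
          rw [← h2]; push_cast; ring_nf
        exact h3.mono (fun z hz => le_of_lt (lt_of_lt_of_le hx.1 (le_of_lt hz))))
      hint
    rw [hzero (n+1) (Nat.le_add_left 1 n)] at heq
    linarith [heq]
  have hr := hrec (n+1) (Nat.le_add_left 1 n) y hy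
  have h2 : f (n + 1 - 1) = f n := by simp
  rw [h2] at hr
  push_cast at hr
  have hc : (fun s : ℝ => f n s / (s + ((n:ℝ)+1))) = fun s => f n s / (s + n + 1) := by
    funext s; ring_nf
  rw [hc] at hr
  rw [hFTC] at hr
  linarith [hr]
end

section
/- Let φ(x) = 0 for x < λ and φ(x) = 1/(x+a) for x ≥ λ with λ + a > 0. Then φ^{*2}(x) = (2/(x+2a))·ln((x−2λ)/(λ+a) + 1) for x ≥ 2λ. -/
open MeasureTheory Set

/-!
On `[λ, x - λ]` both factors of `φ (x - t) * φ t` are live and the integrand is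
`1 / ((t + a) (x + a - t))`; outside it one factor vanishes. Partial fractions give the
antiderivative `(log (t + a) - log (x + a - t)) / (x + 2a)`, and the two endpoint
contributions coincide by the symmetry `t ↦ x - t`, hence the factor `2`.
-/

theorem hasDerivAt_log_sub_log_div {a b t : ℝ} (ha : 0 < t + a) (hb : 0 < b - t) :
    HasDerivAt (fun t => (Real.log (t + a) - Real.log (b - t)) / (a + b))
      ((t + a) * (b - t))⁻¹ t := by
  have hleft : HasDerivAt (fun t => Real.log (t + a)) (t + a)⁻¹ t := by
    simpa using ((hasDerivAt_id t).add_const a).log ha.ne'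
  have hright : HasDerivAt (fun t => Real.log (b - t)) ((-1) / (b - t)) t := by
    simpa using ((hasDerivAt_id t).const_sub b).log hb.ne'
  have hab : a + b ≠ 0 := (by linarith : 0 < a + b).ne'
  refine ((hleft.sub hright).div_const (a + b)).congr_deriv ?_
  field_simp
  ring

theorem integral_inv_add_mul_sub {a b p q : ℝ} (hp : p ∈ Ioo (-a) b) (hq : q ∈ Ioo (-a) b) :
    ∫ t in p..q, ((t + a) * (b - t))⁻¹
      = (Real.log (q + a) - Real.log (b - q)) / (a + b)
        - (Real.log (p + a) - Real.log (b - p)) / (a + b) := by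
  have hsub : uIcc p q ⊆ Ioo (-a) b := ordConnected_Ioo.uIcc_subset hp hq
  have hpos : ∀ t ∈ uIcc p q, 0 < t + a ∧ 0 < b - t := fun t ht => by
    obtain ⟨h₁, h₂⟩ := hsub ht
    constructor <;> linarith
  refine intervalIntegral.integral_eq_sub_of_hasDerivAt
    (fun t ht => hasDerivAt_log_sub_log_div (hpos t ht).1 (hpos t ht).2) ?_
  refine ContinuousOn.intervalIntegrable (ContinuousOn.inv₀ (by fun_prop) fun t ht => ?_)
  exact (mul_pos (hpos t ht).1 (hpos t ht).2).ne'

theorem mul_comp_sub_eq_indicator {lam a x : ℝ} {φ : ℝ → ℝ}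
    (hφ₁ : ∀ x : ℝ, x < lam → φ x = 0) (hφ₂ : ∀ x : ℝ, lam ≤ x → φ x = 1 / (x + a)) :
    (fun t => φ (x - t) * φ t)
      = indicator (Icc lam (x - lam)) (fun t => ((t + a) * (x + a - t))⁻¹) := by
  funext t
  by_cases ht : t ∈ Icc lam (x - lam)
  · rw [indicator_of_mem ht, hφ₂ t ht.1, hφ₂ (x - t) (by linarith [ht.2])]
    rw [one_div_mul_one_div, one_div, mul_comm, add_sub_right_comm]
  · rw [indicator_of_notMem ht]
    rcases not_and_or.mp ht with h | h
    · rw [hφ₁ t (not_le.mp h), mul_zero]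
    · rw [hφ₁ (x - t) (by linarith [not_le.mp h]), zero_mul]

/-- Let `φ(x) = 0` for `x < λ` and `φ(x) = 1/(x+a)` for `x ≥ λ`, with `λ + a > 0`.
Then `φ^{*2}(x) = ∫ φ(x−t)·φ(t) dt = (2/(x+2a))·ln((x−2λ)/(λ+a) + 1)` for `x ≥ 2λ`. -/
theorem stmt_5 (lam a : ℝ) (hpos : 0 < lam + a) (φ : ℝ → ℝ)
    (hφ₁ : ∀ x : ℝ, x < lam → φ x = 0)
    (hφ₂ : ∀ x : ℝ, lam ≤ x → φ x = 1 / (x + a)) :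
    ∀ x : ℝ, 2 * lam ≤ x →
      (∫ t : ℝ, φ (x - t) * φ t)
        = (2 / (x + 2 * a)) * Real.log ((x - 2 * lam) / (lam + a) + 1) := by
  intro x hx
  have hend : (x - 2 * lam) / (lam + a) + 1 = (x - lam + a) / (lam + a) := by
    field_simp; ring
  rw [mul_comp_sub_eq_indicator hφ₁ hφ₂, integral_indicator measurableSet_Icc,
    integral_Icc_eq_integral_Ioc, ← intervalIntegral.integral_of_le (by linarith),
    integral_inv_add_mul_sub ⟨by linarith, by linarith⟩ ⟨by linarith, by linarith⟩,
    show x + a - (x - lam) = lam + a by ring, show x + a - lam = x - lam + a by ring,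
    hend, Real.log_div (by linarith) hpos.ne']
  ring
end

section
/- Let g(x) = Σ_{k≥0} aₖ·x^{−k} converge for x > 1/C > 0, and define H[g] as the antiderivative of g(x)/x given by H[g](x) = a₀·ln(x) − Σ_{k≥1} (aₖ/k)·x^{−k}. Then the m-fold iterate satisfies H^m[g](x) = a₀·ln(x)^m/m! + (−1)^m·Σ_{k≥1} (aₖ/k^m)·x^{−k} for all m ≥ 0 and x > 1/C. -/
/-!
Write `T_m(x) = Σ_{k≥0} b_k/(k+1)^m · x^{-(k+1)}` with `b_k = a_{k+1}`. Since
`(x^{-(k+1)})′ = -(k+1) x^{-(k+1)}/x`, we get `(T_{m+1})′(x) = -T_m(x)/x`; term-wise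
differentiation is justified by domination by `|b_k| c^{-(k+2)}` on `(c, ∞)` for any `c > 1/C`.
Together with `(ln^{m+1}/(m+1)!)′ = ln^m/m!/x`, the claimed expansion `E_m` satisfies the same
recursion `E_{m+1}′ = E_m/x` as `H^m[g]`. On the interval `(1/C, ∞)` two antiderivatives differ by
a constant, and the normalisation at infinity forces it to vanish, because `T_m(x) → 0` by
dominated convergence.
-/

open Filter Topology

open scoped Nat

theorem eq_of_hasDerivAt_of_tendsto_sub_atTop {f g f' : ℝ → ℝ} {R : ℝ}
    (hf : ∀ x, R < x → HasDerivAt f (f' x) x) (hg : ∀ x, R < x → HasDerivAt g (f' x) x)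
    (hfg : Tendsto (fun x => f x - g x) atTop (𝓝 0)) {x : ℝ} (hx : R < x) : f x = g x := by
  obtain ⟨c, hc⟩ := isOpen_Ioi.exists_eq_add_of_deriv_eq isPreconnected_Ioi
    (fun y hy => (hf y hy).differentiableAt.differentiableWithinAt)
    (fun y hy => (hg y hy).differentiableAt.differentiableWithinAt)
    (fun y hy => (hf y hy).deriv.trans (hg y hy).deriv.symm)
  have hconst : Tendsto (fun x => f x - g x) atTop (𝓝 c) :=
    tendsto_const_nhds.congr' <| (eventually_gt_atTop R).mono fun y hy => by
      simp only [hc (Set.mem_Ioi.2 hy), add_sub_cancel_left]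
  simp only [hc hx, tendsto_nhds_unique hconst hfg, add_zero]

theorem norm_mul_zpow_neg_succ_le {c y : ℝ} (hc : 0 < c) (hcy : c ≤ y) (d : ℝ) (k : ℕ) :
    ‖d * y ^ (-((k : ℤ) + 1))‖ ≤ ‖d * c ^ (-((k : ℤ) + 1))‖ := by
  have hy : 0 < y := hc.trans_le hcy
  rw [norm_mul, norm_mul, Real.norm_of_nonneg (zpow_pos hy _).le,
    Real.norm_of_nonneg (zpow_pos hc _).le, zpow_neg, zpow_neg]
  gcongr
  exact zpow_le_zpow_left₀ (by positivity) hc.le hcy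

theorem norm_div_succ_pow_mul_le (d z : ℝ) (m k : ℕ) :
    ‖d / ((k : ℝ) + 1) ^ m * z‖ ≤ ‖d * z‖ := by
  have hden : 1 ≤ ‖((k : ℝ) + 1) ^ m‖ := by
    rw [norm_pow, Real.norm_of_nonneg (by positivity)]
    exact one_le_pow₀ (by simp)
  rw [div_mul_eq_mul_div, norm_div]
  exact div_le_self (norm_nonneg _) hden

theorem hasDerivAt_div_succ_pow_mul_zpow (d : ℝ) (m k : ℕ) {y : ℝ} (hy : y ≠ 0) :
    HasDerivAt (fun z => d / ((k : ℝ) + 1) ^ (m + 1) * z ^ (-((k : ℤ) + 1)))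
      (-(d / ((k : ℝ) + 1) ^ m * y ^ (-((k : ℤ) + 1))) / y) y := by
  refine ((hasDerivAt_zpow _ y (Or.inl hy)).const_mul _).congr_deriv ?_
  have hk : (k : ℝ) + 1 ≠ 0 := by positivity
  rw [zpow_sub_one₀ hy]
  push_cast
  field_simp
  ring

theorem hasDerivAt_log_pow_div_factorial (m : ℕ) {x : ℝ} (hx : x ≠ 0) :
    HasDerivAt (fun y => Real.log y ^ (m + 1) / ((m + 1)! : ℝ)) (Real.log x ^ m / m ! / x) x := by
  refine (((Real.hasDerivAt_log hx).pow (m + 1)).div_const _).congr_deriv ?_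
  rw [Nat.factorial_succ]
  push_cast
  field_simp

noncomputable def harmonicTail (b : ℕ → ℝ) (m : ℕ) (x : ℝ) : ℝ :=
  ∑' k : ℕ, b k / ((k : ℝ) + 1) ^ m * x ^ (-((k : ℤ) + 1))

section HarmonicTail

variable {b : ℕ → ℝ} {R : ℝ}
  (hb : ∀ x, R < x → Summable fun k : ℕ => b k * x ^ (-((k : ℤ) + 1)))
include hb

theorem summable_harmonicTail (m : ℕ) {x : ℝ} (hx : R < x) :
    Summable fun k : ℕ => b k / ((k : ℝ) + 1) ^ m * x ^ (-((k : ℤ) + 1)) :=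
  (hb x hx).norm.of_norm_bounded fun k => norm_div_succ_pow_mul_le _ _ m k

theorem tendsto_harmonicTail_atTop (m : ℕ) : Tendsto (harmonicTail b m) atTop (𝓝 0) := by
  obtain ⟨c, hc, hRc⟩ : ∃ c, 0 < c ∧ R < c :=
    ⟨max R 0 + 1, by positivity, by linarith [le_max_left R 0]⟩
  have hterm (k : ℕ) : Tendsto (fun y : ℝ => b k / ((k : ℝ) + 1) ^ m * y ^ (-((k : ℤ) + 1)))
      atTop (𝓝 0) := by
    simpa only [mul_zero] using (tendsto_zpow_atTop_zero (by omega : -((k : ℤ) + 1) < 0)).const_mul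
      (b k / ((k : ℝ) + 1) ^ m)
  have h := tendsto_tsum_of_dominated_convergence (hb c hRc).norm hterm <|
    (eventually_ge_atTop c).mono fun y hy k =>
      (norm_div_succ_pow_mul_le _ _ m k).trans (norm_mul_zpow_neg_succ_le hc hy _ k)
  rw [tsum_zero] at h
  exact h

theorem hasDerivAt_harmonicTail (hR : 0 ≤ R) (m : ℕ) {x : ℝ} (hx : R < x) :
    HasDerivAt (harmonicTail b (m + 1)) (-harmonicTail b m x / x) x := by
  obtain ⟨c, hRc, hcx⟩ := exists_between hx
  have hc : 0 < c := hR.trans_lt hRc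
  have hderiv := hasDerivAt_tsum_of_isPreconnected (((hb c hRc).norm).div_const c) isOpen_Ioi
    isPreconnected_Ioi (y₀ := x) (y := x)
    (fun k y (hy : c < y) => hasDerivAt_div_succ_pow_mul_zpow (b k) m k (hc.trans hy).ne')
    (fun k y (hy : c < y) => by
      rw [norm_div, norm_neg, Real.norm_of_nonneg (hc.trans hy).le]
      exact div_le_div₀ (norm_nonneg _) ((norm_div_succ_pow_mul_le _ _ m k).trans
        (norm_mul_zpow_neg_succ_le hc hy.le _ k)) hc hy.le)
    hcx (summable_harmonicTail hb (m + 1) hx) hcx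
  rwa [tsum_div_const, tsum_neg] at hderiv

end HarmonicTail

noncomputable def harmonicExpansion (a : ℕ → ℝ) (m : ℕ) (x : ℝ) : ℝ :=
  a 0 * Real.log x ^ m / (m ! : ℝ) + (-1 : ℝ) ^ m * harmonicTail (fun k => a (k + 1)) m x

theorem harmonicExpansion_zero {a : ℕ → ℝ} {x : ℝ}
    (ha : Summable fun k : ℕ => a k * x ^ (-(k : ℤ))) :
    harmonicExpansion a 0 x = ∑' k : ℕ, a k * x ^ (-(k : ℤ)) := by
  rw [ha.tsum_eq_zero_add]
  simp [harmonicExpansion, harmonicTail]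

section HarmonicExpansion

variable {a : ℕ → ℝ} {R : ℝ}
  (ha : ∀ x, R < x → Summable fun k : ℕ => a (k + 1) * x ^ (-((k : ℤ) + 1)))
include ha

theorem hasDerivAt_harmonicExpansion (hR : 0 ≤ R) (m : ℕ) {x : ℝ} (hx : R < x) :
    HasDerivAt (harmonicExpansion a (m + 1)) (harmonicExpansion a m x / x) x := by
  have hx0 : x ≠ 0 := (hR.trans_lt hx).ne'
  have hsplit : harmonicExpansion a (m + 1) = fun y =>
      a 0 * (Real.log y ^ (m + 1) / ((m + 1)! : ℝ))
        + (-1 : ℝ) ^ (m + 1) * harmonicTail (fun k => a (k + 1)) (m + 1) y := by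
    funext y
    simp only [harmonicExpansion, mul_div_assoc]
  rw [hsplit]
  refine (((hasDerivAt_log_pow_div_factorial m hx0).const_mul (a 0)).add
    ((hasDerivAt_harmonicTail ha hR m hx).const_mul ((-1 : ℝ) ^ (m + 1)))).congr_deriv ?_
  simp only [harmonicExpansion]
  ring

theorem tendsto_harmonicExpansion_sub_log_pow (m : ℕ) :
    Tendsto (fun x => harmonicExpansion a m x - a 0 * Real.log x ^ m / (m ! : ℝ)) atTop (𝓝 0) := by
  simpa [harmonicExpansion] using (tendsto_harmonicTail_atTop ha m).const_mul ((-1 : ℝ) ^ m)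

end HarmonicExpansion

/-- Let `g(x) = Σ_{k≥0} aₖ·x^{−k}` converge for `x > 1/C > 0`, and let `Hg m = H^m[g]`
be the iterated harmonic antiderivatives (`Hg 0 = g`, `(Hg (m+1))′(x) = Hg m (x)/x`),
with the integration constants fixed so that `H^{m+1}[g](x) − a₀·ln(x)^{m+1}/(m+1)!`
vanishes at infinity.  Then for all `m ≥ 0` and `x > 1/C` the series
`Σ_{k≥1} (aₖ/k^m)·x^{−k}` converges and
`H^m[g](x) = a₀·ln(x)^m/m! + (−1)^m·Σ_{k≥1} (aₖ/k^m)·x^{−k}`. -/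
theorem stmt_6 (C : ℝ) (hC : 0 < C) (a : ℕ → ℝ) (g : ℝ → ℝ)
    (hsum : ∀ x : ℝ, 1 / C < x → Summable (fun k : ℕ => a k * x ^ (-(k : ℤ))))
    (hg : ∀ x : ℝ, 1 / C < x → g x = ∑' k : ℕ, a k * x ^ (-(k : ℤ)))
    (Hg : ℕ → ℝ → ℝ)
    (hHg0 : ∀ x : ℝ, 1 / C < x → Hg 0 x = g x)
    (hderiv : ∀ m : ℕ, ∀ x : ℝ, 1 / C < x → HasDerivAt (Hg (m + 1)) (Hg m x / x) x)
    (hnorm : ∀ m : ℕ, Tendsto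
      (fun x : ℝ => Hg (m + 1) x - a 0 * (Real.log x) ^ (m + 1) / (Nat.factorial (m + 1) : ℝ))
      atTop (nhds 0)) :
    ∀ m : ℕ, ∀ x : ℝ, 1 / C < x →
      Summable (fun k : ℕ => a (k + 1) / ((k : ℝ) + 1) ^ m * x ^ (-((k : ℤ) + 1))) ∧
      Hg m x = a 0 * (Real.log x) ^ m / (Nat.factorial m : ℝ)
        + (-1 : ℝ) ^ m * ∑' k : ℕ, a (k + 1) / ((k : ℝ) + 1) ^ m * x ^ (-((k : ℤ) + 1)) := by
  have hR : 0 ≤ 1 / C := by positivity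
  have htail : ∀ x, 1 / C < x → Summable fun k : ℕ => a (k + 1) * x ^ (-((k : ℤ) + 1)) :=
    fun x hx => by simpa using (summable_nat_add_iff 1).2 (hsum x hx)
  have hexp : ∀ m x, 1 / C < x → Hg m x = harmonicExpansion a m x := by
    intro m
    induction m with
    | zero => intro x hx; rw [hHg0 x hx, hg x hx, harmonicExpansion_zero (hsum x hx)]
    | succ m ih =>
      refine fun x => eq_of_hasDerivAt_of_tendsto_sub_atTop (hderiv m) (fun y hy => ?_) ?_
      · exact (ih y hy).symm ▸ hasDerivAt_harmonicExpansion htail hR m hy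
      · simpa using (hnorm m).sub (tendsto_harmonicExpansion_sub_log_pow htail (m + 1))
  exact fun m x hx => ⟨summable_harmonicTail htail m hx, hexp m x hx⟩
end

section
/- For the matrices A^s defined by A^s_{m,0} = δ_{m,0} and A^s_{m,j} = Σ_{μ=0}^{m−j} A^s_{m−μ−1, j−1}·C(m, μ+1)·(s−m+1)^{(μ)} (s ≥ m ≥ j ≥ 1), the first-column-adjacent entries satisfy A^s_{m,1} = (s−1)^{\underline{m−1}} (falling factorial) for all s ≥ m ≥ 1. -/
/-- The integer matrices `A^s` of the paper: `A^s_{m,0} = δ_{m,0}` and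
`A^s_{m,j} = Σ_{μ=0}^{m−j} A^s_{m−μ−1, j−1}·C(m, μ+1)·(s−m+1)^{(μ)}` for `j ≥ 1`,
where `(·)^{(μ)}` is the rising factorial. -/
def Amat (s : ℕ) : ℕ → ℕ → ℕ
  | m, 0 => if m = 0 then 1 else 0
  | m, j + 1 => ∑ μ ∈ Finset.range (m - j),
      Amat s (m - μ - 1) j * m.choose (μ + 1) * Nat.ascFactorial (s - m + 1) μ

/-- `A^s_{m,1} = (s−1)^{\underline{m−1}}` (falling factorial) for `s ≥ m ≥ 1`. -/
theorem stmt_14 (s m : ℕ) (hm : 1 ≤ m) (hms : m ≤ s) :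
    Amat s m 1 = Nat.descFactorial (s - 1) (m - 1) := by
  rw [show (1:ℕ) = 0 + 1 from rfl, Amat]
  rw [Finset.sum_eq_single (m - 1)]
  · have h1 : m - (m - 1) - 1 = 0 := by omega
    rw [h1, Amat, if_pos rfl, one_mul, Nat.sub_add_cancel hm, Nat.choose_self, one_mul,
      ← Nat.add_descFactorial_eq_ascFactorial' (s - m + 1) (m - 1)]
    congr 1
    omega
  · intro μ hμ hne
    simp only [Finset.mem_range, Nat.sub_zero] at hμ
    have : m - μ - 1 ≠ 0 := by omega
    rw [Amat, if_neg this, zero_mul, zero_mul]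
  · intro h
    simp only [Finset.mem_range, Nat.sub_zero] at h
    omega
end

section
/- For x > 2, the coefficient function Q₃(x) := −H[(1/2)·Li₁(1/x)² − (Li₂(1/x) − Li₂(1/(x−1)))] admits the power series expansion Q₃(x) = Σ_{k≥2} (1/k)·( (1/k!)·s(k,2) + Σ_{r=1}^{k−1} C(k−1,r)/(k−r)² )·x^{−k}, where s(k,2) are unsigned Stirling numbers of the first kind. -/
open Filter

/-- Unsigned Stirling numbers of the first kind. -/
def stirling1 : ℕ → ℕ → ℕ
  | 0, 0 => 1
  | 0, _ + 1 => 0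
  | _ + 1, 0 => 0
  | k + 1, n + 1 => k * stirling1 k (n + 1) + stirling1 k n

/-!
Write `y = 1/x`, so that `1/(x-1) = y/(1-y)`. The source term
`(1/2)·Li₁(y)² - (Li₂(y) - Li₂(y/(1-y)))` is a power series `∑ cⱼ y^(j+2)` with nonnegative
coefficients: `Li₁(y)²` is a Cauchy product whose coefficients are `2 H_{k+1}/(k+2)`, and
`H_{k+1}/(k+2) = s(k+2,2)/(k+2)!`; expanding `(1-y)^(-(n+1))` binomially inside
`Li₂(y/(1-y))` and regrouping along antidiagonals gives the binomial sums. Integrating term by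
term, `G(y) = ∑ cⱼ y^(j+2)/(j+2)` makes `x ↦ G(1/x)` solve the same differential equation as `Q₃`
on `(2, ∞)`, and both vanish at infinity, so they coincide.
-/

open Finset Topology Nat

theorem hasSum_sum_antidiagonal_of_nonneg {g : ℕ × ℕ → ℝ} {R : ℕ → ℝ} {S : ℝ} (hg : 0 ≤ g)
    (hrow : ∀ n, HasSum (fun m => g (n, m)) (R n)) (hR : HasSum R S) :
    HasSum (fun k => ∑ p ∈ antidiagonal k, g p) S := by
  have hsum : Summable g := (summable_prod_of_nonneg hg).2
    ⟨fun n => (hrow n).summable, hR.summable.congr fun n => ((hrow n).tsum_eq).symm⟩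
  have hgS : HasSum g S := by
    rw [hR.unique (hsum.hasSum.prod_fiberwise hrow)]
    exact hsum.hasSum
  refine (HasAntidiagonal.sigmaAntidiagonalEquivProd.hasSum_iff.2 hgS).sigma fun k => ?_
  simpa [sum_attach] using hasSum_fintype (fun p : antidiagonal k => g p)

theorem hasDerivAt_tsum_mul_pow_div {c : ℕ → ℝ} {r y : ℝ} (k : ℕ)
    (hc : Summable fun j => |c j| * r ^ (j + k)) (hy : |y| < r) :
    HasDerivAt (fun z => ∑' j, c j * z ^ (j + k + 1) / (j + k + 1 : ℕ))
      (∑' j, c j * y ^ (j + k)) y := by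
  have hball {z : ℝ} : z ∈ Metric.ball 0 r ↔ |z| < r := by
    rw [Metric.mem_ball, Real.dist_0_eq_abs]
  have hterm (j : ℕ) (z : ℝ) :
      HasDerivAt (fun z => c j * z ^ (j + k + 1) / (j + k + 1 : ℕ)) (c j * z ^ (j + k)) z := by
    refine (((hasDerivAt_pow (j + k + 1) z).const_mul (c j)).div_const _).congr_deriv ?_
    rw [Nat.add_sub_cancel]
    field_simp
  refine hasDerivAt_tsum_of_isPreconnected hc Metric.isOpen_ball
    (convex_ball 0 r).isPreconnected (fun j z _ => hterm j z) (fun j z hz => ?_)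
    (hball.2 (by rw [abs_zero]; exact (abs_nonneg y).trans_lt hy)) (y₀ := 0) ?_ (hball.2 hy)
  · rw [Real.norm_eq_abs, abs_mul, abs_pow]
    gcongr
    exact (hball.1 hz).le
  · simp

theorem eqOn_Ioi_of_hasDerivAt_of_tendsto_atTop {f g f' : ℝ → ℝ} {a l : ℝ}
    (hf : ∀ x, a < x → HasDerivAt f (f' x) x) (hg : ∀ x, a < x → HasDerivAt g (f' x) x)
    (hfl : Tendsto f atTop (𝓝 l)) (hgl : Tendsto g atTop (𝓝 l)) :
    Set.EqOn f g (Set.Ioi a) := by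
  obtain ⟨c, hc⟩ := isOpen_Ioi.exists_eq_add_of_deriv_eq isPreconnected_Ioi
    (fun x hx => (hf x hx).differentiableAt.differentiableWithinAt)
    (fun x hx => (hg x hx).differentiableAt.differentiableWithinAt)
    (fun x hx => (hf x hx).deriv.trans (hg x hx).deriv.symm)
  have hc0 : l = l + c := tendsto_nhds_unique hfl <|
    (hgl.add_const c).congr' <| eventually_gt_atTop a |>.mono fun x hx => (hc hx).symm
  intro x hx
  simpa [left_eq_add.1 hc0] using hc hx

theorem stirling1_succ_one (k : ℕ) : stirling1 (k + 1) 1 = k ! := by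
  induction k with
  | zero => rfl
  | succ k ih =>
    rw [stirling1, ih, stirling1, Nat.factorial_succ]
    ring

theorem stirling1_succ_succ_two (k : ℕ) :
    (stirling1 (k + 2) 2 : ℝ) = (k + 1)! * harmonic (k + 1) := by
  induction k with
  | zero => simp [stirling1]
  | succ k ih =>
    rw [stirling1, Nat.cast_add, Nat.cast_mul, ih, stirling1_succ_one, harmonic_succ (k + 1),
      Nat.factorial_succ (k + 1)]
    push_cast
    field_simp
    ring

theorem stirling1_two_div_factorial (k : ℕ) :
    1 / ((k + 2)! : ℝ) * stirling1 (k + 2) 2 = harmonic (k + 1) / ((k : ℝ) + 2) := by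
  rw [stirling1_succ_succ_two, Nat.factorial_succ (k + 1)]
  push_cast
  field_simp
  ring

theorem sum_antidiagonal_inv_mul_inv (k : ℕ) :
    ∑ p ∈ antidiagonal k, (((p.1 : ℝ) + 1) * ((p.2 : ℝ) + 1))⁻¹
      = 2 * harmonic (k + 1) / ((k : ℝ) + 2) := by
  have hsplit : ∀ p ∈ antidiagonal k, (((p.1 : ℝ) + 1) * ((p.2 : ℝ) + 1))⁻¹
      = (((p.1 : ℝ) + 1)⁻¹ + ((p.2 : ℝ) + 1)⁻¹) / ((k : ℝ) + 2) := by
    intro p hp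
    have hk : (p.1 : ℝ) + p.2 = k := by exact_mod_cast HasAntidiagonal.mem_antidiagonal.1 hp
    rw [← hk]
    field_simp
    ring
  have hharm : ∑ p ∈ antidiagonal k, ((p.1 : ℝ) + 1)⁻¹ = harmonic (k + 1) := by
    rw [Nat.sum_antidiagonal_eq_sum_range_succ_mk, harmonic]
    push_cast
    rfl
  have hharm' : ∑ p ∈ antidiagonal k, ((p.2 : ℝ) + 1)⁻¹ = harmonic (k + 1) := by
    rw [← hharm, ← Nat.sum_antidiagonal_swap]
    rfl
  rw [sum_congr rfl hsplit, ← sum_div, sum_add_distrib, hharm, hharm']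
  ring

theorem sum_Icc_choose_div_sq_eq_sum_antidiagonal (j : ℕ) :
    ∑ r ∈ Icc 1 (j + 1), ((j + 1).choose r : ℝ) / ((j : ℝ) + 2 - r) ^ 2
      = ∑ p ∈ antidiagonal j, ((j + 1).choose p.1 : ℝ) / ((p.1 : ℝ) + 1) ^ 2 := by
  refine sum_nbij' (fun r => (j + 1 - r, r - 1)) (fun p => p.2 + 1) ?_ ?_ ?_ ?_ ?_
  · intro r hr; simp only [mem_Icc, HasAntidiagonal.mem_antidiagonal] at hr ⊢; omega
  · intro p hp; simp only [mem_Icc, HasAntidiagonal.mem_antidiagonal] at hp ⊢; omega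
  · intro r hr; simp only [mem_Icc] at hr; omega
  · intro p hp; simp only [HasAntidiagonal.mem_antidiagonal] at hp; ext <;> simp; omega
  · intro r hr
    simp only [mem_Icc] at hr
    rw [Nat.choose_symm hr.2, Nat.cast_sub hr.2]
    push_cast
    ring_nf

theorem hasSum_half_sq_neg_log_one_sub {y : ℝ} (hy0 : 0 ≤ y) (hy1 : y < 1) :
    HasSum (fun k => (harmonic (k + 1) : ℝ) / ((k : ℝ) + 2) * y ^ (k + 2))
      (1 / 2 * (-Real.log (1 - y)) ^ 2) := by
  set a : ℕ → ℝ := fun n => y ^ (n + 1) / ((n : ℝ) + 1)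
  have hlog : HasSum a (-Real.log (1 - y)) :=
    Real.hasSum_pow_div_log_of_abs_lt_one (by rwa [abs_of_nonneg hy0])
  have h := hasSum_sum_antidiagonal_of_nonneg (g := fun p => a p.1 * a p.2)
    (fun p => by positivity) (fun n => hlog.mul_left (a n)) (hlog.mul_right _)
  rw [sq]
  refine (h.mul_left (1 / 2)).congr_fun fun k => ?_
  have hterm : ∀ p ∈ antidiagonal k, a p.1 * a p.2
      = (((p.1 : ℝ) + 1) * ((p.2 : ℝ) + 1))⁻¹ * y ^ (k + 2) := by
    intro p hp
    rw [← HasAntidiagonal.mem_antidiagonal.1 hp]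
    simp only [a]
    field_simp
    ring
  rw [sum_congr rfl hterm, ← sum_mul, sum_antidiagonal_inv_mul_inv]
  ring

noncomputable def dilogSeries (z : ℝ) : ℝ :=
  ∑' n : ℕ, z ^ (n + 1) / ((n : ℝ) + 1) ^ 2

theorem summable_pow_succ_div_sq {z : ℝ} (hz : |z| ≤ 1) :
    Summable fun n : ℕ => z ^ (n + 1) / ((n : ℝ) + 1) ^ 2 := by
  have hp : Summable fun n : ℕ => 1 / ((n + 1 : ℕ) : ℝ) ^ 2 :=
    (summable_nat_add_iff 1).2 (Real.summable_one_div_nat_pow.2 one_lt_two)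
  refine .of_norm_bounded hp fun n => ?_
  rw [norm_div, norm_pow, Real.norm_eq_abs, norm_pow, Real.norm_eq_abs]
  push_cast
  gcongr
  · exact pow_le_one₀ (abs_nonneg z) hz
  · rw [abs_of_nonneg (by positivity)]

theorem hasSum_dilogSeries_div_one_sub_sub {y : ℝ} (hy0 : 0 ≤ y) (hy : y < 1 / 2) :
    HasSum (fun j : ℕ => (∑ r ∈ Icc 1 (j + 1), ((j + 1).choose r : ℝ) / ((j : ℝ) + 2 - r) ^ 2)
        * y ^ (j + 2))
      (dilogSeries (y / (1 - y)) - dilogSeries y) := by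
  have hy1 : 0 < 1 - y := by linarith
  have hz : |y / (1 - y)| ≤ 1 := by
    rw [abs_of_nonneg (by positivity), div_le_one hy1]
    linarith
  set a : ℕ → ℝ := fun n => y ^ (n + 1) / ((n : ℝ) + 1) ^ 2
  have hrow (n : ℕ) := (hasSum_choose_mul_geometric_of_norm_lt_one (𝕜 := ℝ) n
    (by rw [Real.norm_eq_abs, abs_of_nonneg hy0]; linarith)).mul_left (a n)
  have hR : HasSum (fun n => a n * (1 / (1 - y) ^ (n + 1))) (dilogSeries (y / (1 - y))) := by
    refine (summable_pow_succ_div_sq hz).hasSum.congr_fun fun n => ?_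
    simp only [a]
    rw [div_pow]
    field_simp
  have h := (hasSum_sum_antidiagonal_of_nonneg
    (g := fun p => a p.1 * ((p.2 + p.1).choose p.1 * y ^ p.2)) (fun p => by positivity) hrow hR).sub
    (summable_pow_succ_div_sq (z := y) (by rw [abs_of_nonneg hy0]; linarith)).hasSum
  rw [← hasSum_nat_add_iff' 1, range_one, sum_singleton, Nat.antidiagonal_zero, sum_singleton] at h
  simp only [a] at h
  norm_num at h
  refine h.congr_fun fun j => ?_
  -- the `m = 0` term of the antidiagonal sum is the term of `dilogSeries y`
  rw [Nat.sum_antidiagonal_succ', sum_Icc_choose_div_sq_eq_sum_antidiagonal, sum_mul]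
  simp only [zero_add, Nat.choose_self, Nat.cast_one, pow_zero, mul_one, Nat.cast_add]
  rw [add_sub_cancel_left]
  refine sum_congr rfl fun p hp => ?_
  rw [← HasAntidiagonal.mem_antidiagonal.1 hp, show p.2 + 1 + p.1 = p.1 + p.2 + 1 by ring]
  ring

noncomputable def q3Coeff (j : ℕ) : ℝ :=
  1 / ((j + 2)! : ℝ) * stirling1 (j + 2) 2
    + ∑ r ∈ Icc 1 (j + 1), ((j + 1).choose r : ℝ) / ((j : ℝ) + 2 - r) ^ 2

theorem q3Coeff_nonneg (j : ℕ) : 0 ≤ q3Coeff j := by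
  unfold q3Coeff
  positivity

theorem hasSum_q3Coeff {y : ℝ} (hy0 : 0 ≤ y) (hy : y < 1 / 2) :
    HasSum (fun j => q3Coeff j * y ^ (j + 2))
      (1 / 2 * (-Real.log (1 - y)) ^ 2 - (dilogSeries y - dilogSeries (y / (1 - y)))) := by
  rw [sub_sub_eq_add_sub, add_sub_assoc]
  refine ((hasSum_half_sq_neg_log_one_sub hy0 (by linarith)).add
    (hasSum_dilogSeries_div_one_sub_sub hy0 hy)).congr_fun fun j => ?_
  rw [q3Coeff, stirling1_two_div_factorial, add_mul]

noncomputable def q3Series (z : ℝ) : ℝ :=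
  ∑' j, q3Coeff j * z ^ (j + 1 + 1) / (j + 1 + 1 : ℕ)

theorem hasDerivAt_q3Series {y : ℝ} (hy : |y| < 1 / 2) :
    HasDerivAt q3Series (∑' j, q3Coeff j * y ^ (j + 1)) y := by
  obtain ⟨r, hyr, hr⟩ := exists_between hy
  have hr0 : 0 < r := (abs_nonneg y).trans_lt hyr
  -- nonnegative coefficients: convergence of the source series at `r` is absolute convergence
  refine hasDerivAt_tsum_mul_pow_div 1 (((hasSum_q3Coeff hr0.le hr).summable.mul_right r⁻¹).congr
    fun j => ?_) hyr
  rw [abs_of_nonneg (q3Coeff_nonneg j)]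
  field_simp
  ring

theorem hasDerivAt_q3Series_inv {t : ℝ} (ht : 2 < t) :
    HasDerivAt (fun t => q3Series t⁻¹)
      (-((1 / 2 * (-Real.log (1 - 1 / t)) ^ 2 - (dilogSeries (1 / t) - dilogSeries (1 / (t - 1))))
        / t)) t := by
  have ht0 : 0 < t := by linarith
  have hS := hasSum_q3Coeff (y := 1 / t) (by positivity) (by gcongr)
  rw [show 1 / t / (1 - 1 / t) = 1 / (t - 1) by field_simp] at hS
  rw [← hS.tsum_eq]
  have hy : |t⁻¹| < 1 / 2 := by
    rw [abs_of_pos (by positivity), ← one_div]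
    gcongr
  refine ((hasDerivAt_q3Series hy).comp t (hasDerivAt_inv ht0.ne')).congr_deriv ?_
  rw [mul_neg, neg_inj, ← tsum_div_const, ← tsum_mul_right]
  refine tsum_congr fun j => ?_
  rw [one_div]
  ring

theorem tendsto_q3Series_inv_atTop : Tendsto (fun t => q3Series t⁻¹) atTop (𝓝 0) := by
  have h0 : q3Series 0 = 0 := by simp [q3Series]
  exact h0 ▸ (hasDerivAt_q3Series (by norm_num)).continuousAt.tendsto.comp tendsto_inv_atTop_zero

/-- Let `Q₃ := −H[(1/2)·Li₁(1/x)² − (Li₂(1/x) − Li₂(1/(x−1)))]`, i.e.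
`x·Q₃′(x) = −((1/2)·Li₁(1/x)² − ∇[Li₂(1/·)](x))` with the integration constant fixed
by decay at infinity.  Then for `x > 2`,
`Q₃(x) = Σ_{k≥2} (1/k)·((1/k!)·s(k,2) + Σ_{r=1}^{k−1} C(k−1,r)/(k−r)²)·x^{−k}`. -/
theorem stmt_18 (Li₂ : ℝ → ℝ)
    (hLi₂ : ∀ z : ℝ, |z| < 1 → Li₂ z = ∑' k : ℕ, z ^ (k + 1) / ((k : ℝ) + 1) ^ 2)
    (Q₃ : ℝ → ℝ)
    (hderiv : ∀ x : ℝ, 2 < x → HasDerivAt Q₃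
      (-(((1 / 2) * (-Real.log (1 - 1 / x)) ^ 2
          - (Li₂ (1 / x) - Li₂ (1 / (x - 1)))) / x)) x)
    (hnorm : Tendsto Q₃ atTop (nhds 0)) :
    ∀ x : ℝ, 2 < x →
      Q₃ x = ∑' j : ℕ, (1 / ((j : ℝ) + 2))
        * ((1 / (Nat.factorial (j + 2) : ℝ)) * (stirling1 (j + 2) 2 : ℝ)
            + ∑ r ∈ Finset.Icc 1 (j + 1),
                ((j + 1).choose r : ℝ) / ((j : ℝ) + 2 - r) ^ 2)
        * x ^ (-((j : ℤ) + 2)) := by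
  intro x hx
  have hseries (t : ℝ) (ht : 2 < t) : HasDerivAt (fun t => q3Series t⁻¹)
      (-((1 / 2 * (-Real.log (1 - 1 / t)) ^ 2 - (Li₂ (1 / t) - Li₂ (1 / (t - 1)))) / t)) t := by
    have ht1 : |1 / t| < 1 := by
      rw [abs_of_pos (by positivity), div_lt_one (by linarith)]
      linarith
    have ht2 : |1 / (t - 1)| < 1 := by
      rw [abs_of_pos (one_div_pos.2 (by linarith)), div_lt_one (by linarith)]
      linarith
    rw [hLi₂ _ ht1, hLi₂ _ ht2]
    exact hasDerivAt_q3Series_inv ht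
  rw [eqOn_Ioi_of_hasDerivAt_of_tendsto_atTop hderiv hseries hnorm tendsto_q3Series_inv_atTop hx]
  refine tsum_congr fun j => ?_
  rw [zpow_neg, show (j : ℤ) + 2 = ((j + 2 : ℕ) : ℤ) by push_cast; rfl, zpow_natCast, inv_pow,
    q3Coeff]
  push_cast
  ring
end

section
/- With the decomposition J^n[1](x) = Σ_{j=0}^{n} (−1)^j·Q_j(x)·ln(x)^{n−j}/(n−j)!, where Q₀ = 1, Q₁ = 0, Q₂(x) = Li₂(1/x), one has for n = 2: J²[1](x) = ln(x)²/2 + Li₂(1/x) for x ≥ 2. -/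
open Filter

noncomputable def dilogF (y : ℝ) : ℝ := ∑' k : ℕ, y ^ (k + 1) / ((k : ℝ) + 1) ^ 2

lemma dilogF_hasDerivAt {y : ℝ} (hy : y ∈ Set.Ioo (-(3/4) : ℝ) (3/4)) :
    HasDerivAt dilogF (∑' k : ℕ, y ^ k / ((k : ℝ) + 1)) y := by
  have h := hasDerivAt_tsum_of_isPreconnected
    (u := fun n : ℕ => (3/4 : ℝ) ^ n)
    (g := fun n y => y ^ (n + 1) / ((n : ℝ) + 1) ^ 2)
    (g' := fun n y => y ^ n / ((n : ℝ) + 1))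
    (summable_geometric_of_lt_one (by norm_num) (by norm_num))
    isOpen_Ioo isPreconnected_Ioo
    (fun n z _ => by
      have h1 := (hasDerivAt_pow (n + 1) z).div_const (((n : ℝ) + 1) ^ 2)
      refine h1.congr_deriv ?_
      have hn : ((n : ℝ) + 1) ≠ 0 := by positivity
      push_cast
      field_simp)
    (fun n z hz => by
      have hzb : |z| ≤ 3/4 := by
        rw [abs_le]; constructor <;> [linarith [hz.1]; linarith [hz.2]]
      have h1 : |z ^ n / ((n : ℝ) + 1)| ≤ |z| ^ n := by
        rw [abs_div, abs_pow]
        have : |((n : ℝ) + 1)| = (n : ℝ) + 1 := abs_of_pos (by positivity)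
        rw [this]
        calc |z| ^ n / ((n : ℝ) + 1) ≤ |z| ^ n / 1 := by
              apply div_le_div_of_nonneg_left (by positivity) one_pos
              · simp
            _ = |z| ^ n := by ring
      calc ‖z ^ n / ((n : ℝ) + 1)‖ ≤ |z| ^ n := h1
        _ ≤ (3/4 : ℝ) ^ n := pow_le_pow_left₀ (abs_nonneg z) hzb n)
    (y₀ := 0) (by constructor <;> norm_num)
    (by
      have : (fun n : ℕ => (0 : ℝ) ^ (n + 1) / ((n : ℝ) + 1) ^ 2) = fun _ => 0 := by
        funext n; simp
      rw [this]; exact summable_zero)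
    hy
  exact h

lemma tsum_geom_div (x : ℝ) (hx : 2 ≤ x) :
    ∑' k : ℕ, (1/x) ^ k / ((k : ℝ) + 1) = -Real.log (1 - 1/x) * x := by
  have hx0 : x ≠ 0 := by linarith
  have habs : |1/x| < 1 := by
    rw [abs_of_pos (by positivity)]
    rw [div_lt_one (by linarith)]; linarith
  have hs := Real.hasSum_pow_div_log_of_abs_lt_one habs
  have hs2 : HasSum (fun n : ℕ => (1/x) ^ n / ((n : ℝ) + 1))
      (-Real.log (1 - 1/x) * x) := by
    have := hs.mul_right x
    have e : (fun n : ℕ => (1/x) ^ n / ((n : ℝ) + 1))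
        = fun i : ℕ => (1/x) ^ (i + 1) / ((i : ℝ) + 1) * x := by
      funext n
      rw [pow_succ]
      field_simp
    rw [e]; exact this
  exact hs2.tsum_eq

lemma dilogInv_hasDerivAt {x : ℝ} (hx : 2 ≤ x) :
    HasDerivAt (fun t : ℝ => dilogF (1/t))
      ((Real.log (x - 1) - Real.log x) / x) x := by
  have hx0 : x ≠ 0 := by linarith
  have hmem : (1/x) ∈ Set.Ioo (-(3/4) : ℝ) (3/4) := by
    constructor
    · have : (0:ℝ) < 1/x := by positivity
      linarith
    · have : 1/x ≤ 1/2 := by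
        rw [div_le_div_iff₀ (by linarith) (by norm_num)]; linarith
      linarith
  have hF := dilogF_hasDerivAt hmem
  have hinv : HasDerivAt (fun t : ℝ => 1/t) (-(x^2)⁻¹) x := by
    simpa [one_div] using hasDerivAt_inv hx0
  have hcomp := hF.comp x hinv
  have hval : (∑' k : ℕ, (1/x) ^ k / ((k : ℝ) + 1)) * -(x^2)⁻¹
      = (Real.log (x - 1) - Real.log x) / x := by
    rw [tsum_geom_div x hx]
    have hlog : Real.log (1 - 1/x) = Real.log (x - 1) - Real.log x := by
      have : 1 - 1/x = (x - 1) / x := by field_simp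
      rw [this, Real.log_div (by linarith) hx0]
    rw [hlog]
    field_simp
  rw [← hval]
  exact hcomp

lemma dilogF_zero : dilogF 0 = 0 := by
  unfold dilogF
  have : (fun k : ℕ => (0 : ℝ) ^ (k + 1) / ((k : ℝ) + 1) ^ 2) = fun _ => 0 := by
    funext k; simp
  rw [this, tsum_zero]

/-- With `J = H ∘ S`, `J[1](x) = ln(x)`, so `J²[1]` is the antiderivative of
`x ↦ ln(x−1)/x` normalized (as in the decomposition
`J^n[1](x) = Σ_j (−1)^j Q_j(x) ln(x)^{n−j}/(n−j)!` with `Q₀ = 1`, `Q₁ = 0`,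
`Q₂ = Li₂(1/·)`) so that `J²[1](x) − ln(x)²/2 → 0` at infinity.  Then
`J²[1](x) = ln(x)²/2 + Li₂(1/x)` for `x ≥ 2`. -/
theorem stmt_19 (J2 : ℝ → ℝ)
    (hderiv : ∀ x : ℝ, 2 ≤ x → HasDerivAt J2 (Real.log (x - 1) / x) x)
    (hnorm : Tendsto (fun x : ℝ => J2 x - (Real.log x) ^ 2 / 2) atTop (nhds 0)) :
    ∀ x : ℝ, 2 ≤ x →
      J2 x = (Real.log x) ^ 2 / 2 + ∑' k : ℕ, (1 / x) ^ (k + 1) / ((k : ℝ) + 1) ^ 2 := by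
  set g : ℝ → ℝ := fun x => J2 x - ((Real.log x) ^ 2 / 2 + dilogF (1/x)) with hg
  -- g has zero derivative on [2, ∞)
  have hgderiv : ∀ x : ℝ, 2 ≤ x → HasDerivAt g 0 x := by
    intro x hx
    have hx0 : x ≠ 0 := by linarith
    have h1 := hderiv x hx
    have h2 : HasDerivAt (fun t : ℝ => (Real.log t) ^ 2 / 2) (Real.log x / x) x := by
      have := ((Real.hasDerivAt_log hx0).pow 2).div_const 2
      refine this.congr_deriv ?_
      field_simp
      ring
    have h3 := dilogInv_hasDerivAt hx
    have := h1.sub (h2.add h3)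
    refine this.congr_deriv ?_
    field_simp
    ring
  -- g is constant on [2, ∞): g x = g 2
  have hconst : ∀ x : ℝ, 2 ≤ x → g x = g 2 := by
    intro x hx
    have hcont : ContinuousOn g (Set.Icc 2 x) := fun y hy =>
      ((hgderiv y hy.1).continuousAt).continuousWithinAt
    have hd : ∀ y ∈ Set.Ico 2 x, HasDerivWithinAt g 0 (Set.Ici y) y := fun y hy =>
      (hgderiv y hy.1).hasDerivWithinAt
    exact constant_of_has_deriv_right_zero hcont hd x (Set.mem_Icc.mpr ⟨hx, le_refl x⟩)
  -- g tends to 0 at infinity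
  have hF0 : Tendsto (fun x : ℝ => dilogF (1/x)) atTop (nhds 0) := by
    have hc : ContinuousAt dilogF 0 :=
      (dilogF_hasDerivAt (by constructor <;> norm_num)).continuousAt
    have h2 : Tendsto (fun x : ℝ => 1/x) atTop (nhds 0) := by
      simpa [one_div] using tendsto_inv_atTop_zero
    have := hc.tendsto.comp h2
    simpa [dilogF_zero, Function.comp_def] using this
  have hgtend : Tendsto g atTop (nhds 0) := by
    have : Tendsto (fun x : ℝ => (J2 x - (Real.log x) ^ 2 / 2) - dilogF (1/x))
        atTop (nhds (0 - 0)) := hnorm.sub hF0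
    simpa [hg, sub_sub] using this
  have hgconsttend : Tendsto g atTop (nhds (g 2)) := by
    have : ∀ᶠ x : ℝ in atTop, g x = g 2 := by
      filter_upwards [eventually_ge_atTop (2:ℝ)] with x hx using hconst x hx
    exact Tendsto.congr' (this.mono fun x hx => hx.symm) tendsto_const_nhds
  have hg2 : g 2 = 0 := tendsto_nhds_unique hgconsttend hgtend
  intro x hx
  have := hconst x hx
  rw [hg2] at this
  have : J2 x = (Real.log x) ^ 2 / 2 + dilogF (1/x) := by
    have h := this
    simp only [hg] at h
    linarith
  rw [this]
  rfl
end
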